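/- Let (E, dist) be a metric space equipped with a measure μ, Y a label set, d > 0, and f : E → Y a classifier such that for every x ∈ E the set S_x = {x' ∈ E : f(x') ≠ f(x)} is nonempty, and such that x ↦ min(d, infDist(x, S_x)) is measurable. Then ∫_E (Lebesgue measure of {ε ∈ (0, d) : ∀ x' ∈ B_ε(x), f(x') = f(x)}) dμ(x) = ∫_E min(d, infDist(x, S_x)) dμ(x); i.e., the robustness score R^f_{𝒬_{[0,d]},1,1} obtained by integrating the all-points-preserved indicator over perturbation radii ε ∈ [0,d] and over x equals the μ-average of the (d-truncated) classifier margin. -/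
import Mathlib


open Metric MeasureTheory

/-- The robustness score `R^f_{𝒬_{[0,d]},1,1}`, obtained by integrating over `x` the
Lebesgue measure of the radii `ε ∈ (0, d)` for which all of `B_ε(x)` receives the label
`f x`, equals the `μ`-average of the `d`-truncated classifier margin. -/
theorem geometric_robustness_score_eq_avg_margin
    {E : Type*} [MetricSpace E] [MeasurableSpace E] (μ : Measure E)
    {Y : Type*} (f : E → Y) (d : ℝ) (hd : 0 < d)
    (hS : ∀ x : E, ({x' : E | f x' ≠ f x}).Nonempty)
    (hmeas : Measurable (fun x : E => min d (Metric.infDist x {x' : E | f x' ≠ f x}))) :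
    ∫⁻ x, volume {ε : ℝ | ε ∈ Set.Ioo 0 d ∧ ∀ x' ∈ Metric.ball x ε, f x' = f x} ∂μ
      = ∫⁻ x, ENNReal.ofReal (min d (Metric.infDist x {x' : E | f x' ≠ f x})) ∂μ := by
  refine lintegral_congr fun x => ?_
  set S := {x' : E | f x' ≠ f x} with hSdef
  set m := Metric.infDist x S with hm
  have hm0 : 0 ≤ m := Metric.infDist_nonneg
  have key : ∀ ε : ℝ, (∀ x' ∈ Metric.ball x ε, f x' = f x) ↔ ε ≤ m := by
    intro ε
    constructor
    · intro h
      by_contra hlt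
      push_neg at hlt
      obtain ⟨y, hy, hdy⟩ := (Metric.infDist_lt_iff (hS x)).1 hlt
      exact hy (h y (by rwa [Metric.mem_ball, dist_comm]))
    · intro h x' hx'
      by_contra hne
      have : m ≤ dist x x' := Metric.infDist_le_dist_of_mem hne
      rw [Metric.mem_ball, dist_comm] at hx'
      linarith
  by_cases hdm : d ≤ m
  · have hset : {ε : ℝ | ε ∈ Set.Ioo 0 d ∧ ∀ x' ∈ Metric.ball x ε, f x' = f x}
        = Set.Ioo 0 d := by
      ext ε
      simp only [Set.mem_setOf_eq, Set.mem_Ioo, key]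
      exact ⟨fun h => h.1, fun h => ⟨h, le_trans h.2.le hdm⟩⟩
    rw [hset, Real.volume_Ioo, min_eq_left hdm]
    simp
  · push_neg at hdm
    have hset : {ε : ℝ | ε ∈ Set.Ioo 0 d ∧ ∀ x' ∈ Metric.ball x ε, f x' = f x}
        = Set.Ioc 0 m := by
      ext ε
      simp only [Set.mem_setOf_eq, Set.mem_Ioo, Set.mem_Ioc, key]
      exact ⟨fun h => ⟨h.1.1, h.2⟩, fun h => ⟨⟨h.1, lt_of_le_of_lt h.2 hdm⟩, h.2⟩⟩
    rw [hset, Real.volume_Ioc, min_eq_right hdm.le]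
    simp
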